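/- Let v : I × ℝ^d → ℝ be smooth and satisfy the HJB equation −∂_t v(t,x) = b(x)·∇_x v(t,x) + ½ Σ : D²_x v(t,x) + c(x) − ½ ‖R G(x)ᵀ ∇_x v(t,x)‖_R². Let β : I × ℝ^d → ℝ^d be any continuous (gauge) vector field and X : I → ℝ^d differentiable with Ẋ_t = b(X_t) − β(t, X_t) − G(X_t) R G(X_t)ᵀ ∇_x v(t, X_t). Then P_t := ∇_x v(t, X_t) satisfies the momentum equation of the mean-field Pontryagin system with φ_t = v_t: −Ṗ_t = (Db(X_t))ᵀ P_t − ½ ∇_x[‖R G(x)ᵀ P_t‖_R²]_{x=X_t} (gradient taken with P_t frozen) + ∇c(X_t) + D²_x v(t, X_t) β(t, X_t) + ½ ∇_x( Σ : D²_x v )(t, X_t), and the constraint ∇_x v(t, X_t) = P_t holds for all t ∈ I. -/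

import Mathlib

open Matrix Set

noncomputable section

/-- Gradient of a scalar function on `ℝ^d`. -/
def grad {d : ℕ} (f : (Fin d → ℝ) → ℝ) (x : Fin d → ℝ) : Fin d → ℝ :=
  fun i => fderiv ℝ f x (Pi.single i 1)

/-- Hessian matrix of a scalar function on `ℝ^d`. -/
def hess {d : ℕ} (f : (Fin d → ℝ) → ℝ) (x : Fin d → ℝ) : Matrix (Fin d) (Fin d) ℝ :=
  fun i j => fderiv ℝ (fun y => grad f y j) x (Pi.single i 1)

/-- Jacobian matrix of a vector field on `ℝ^d`. -/
def jac {d : ℕ} (F : (Fin d → ℝ) → (Fin d → ℝ)) (x : Fin d → ℝ) :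
    Matrix (Fin d) (Fin d) ℝ :=
  fun i j => fderiv ℝ (fun y => F y i) x (Pi.single j 1)

/-- Frobenius pairing `Σ : A = ∑_{ij} Σ_{ij} A_{ij}`. -/
def frob {d : ℕ} (S A : Matrix (Fin d) (Fin d) ℝ) : ℝ := ∑ i, ∑ j, S i j * A i j

/-- Weighted norm squared `‖u‖_R² = uᵀ R⁻¹ u`. -/
def wnorm2 {du : ℕ} (R : Matrix (Fin du) (Fin du) ℝ) (u : Fin du → ℝ) : ℝ :=
  u ⬝ᵥ (R⁻¹ *ᵥ u)

/-! ### Auxiliary lemmas -/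

section AuxLemmas

variable {E : Type*} [NormedAddCommGroup E] [NormedSpace ℝ E]
variable {F : Type*} [NormedAddCommGroup F] [NormedSpace ℝ F]

lemma my_htop : ((⊤:ℕ∞) : WithTop ℕ∞) + 1 ≤ ((⊤:ℕ∞) : WithTop ℕ∞) := by
  exact_mod_cast le_top

lemma my_hone : ((⊤:ℕ∞) : WithTop ℕ∞) ≠ 0 := by
  simp

lemma contDiff_fderiv_apply {f : E → F} (hf : ContDiff ℝ (⊤:ℕ∞) f) (w : E) :
    ContDiff ℝ (⊤:ℕ∞) fun x => fderiv ℝ f x w :=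
  (hf.fderiv_right my_htop).clm_apply contDiff_const

lemma pd_add {f g : E → ℝ} {x : E} (hf : DifferentiableAt ℝ f x)
    (hg : DifferentiableAt ℝ g x) (w : E) :
    fderiv ℝ (fun y => f y + g y) x w = fderiv ℝ f x w + fderiv ℝ g x w := by
  rw [fderiv_fun_add hf hg]; rfl

lemma pd_sub {f g : E → ℝ} {x : E} (hf : DifferentiableAt ℝ f x)
    (hg : DifferentiableAt ℝ g x) (w : E) :
    fderiv ℝ (fun y => f y - g y) x w = fderiv ℝ f x w - fderiv ℝ g x w := by
  rw [fderiv_fun_sub hf hg]; rfl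

lemma pd_mul {f g : E → ℝ} {x : E} (hf : DifferentiableAt ℝ f x)
    (hg : DifferentiableAt ℝ g x) (w : E) :
    fderiv ℝ (fun y => f y * g y) x w
      = f x * fderiv ℝ g x w + g x * fderiv ℝ f x w := by
  rw [fderiv_fun_mul hf hg]; simp

lemma pd_sum {ι : Type*} {s : Finset ι} {f : ι → E → ℝ} {x : E}
    (h : ∀ i ∈ s, DifferentiableAt ℝ (f i) x) (w : E) :
    fderiv ℝ (fun y => ∑ i ∈ s, f i y) x w = ∑ i ∈ s, fderiv ℝ (f i) x w := by
  rw [fderiv_fun_sum h]; simp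

lemma pd_const_mul {f : E → ℝ} {x : E} (hf : DifferentiableAt ℝ f x) (a : ℝ) (w : E) :
    fderiv ℝ (fun y => a * f y) x w = a * fderiv ℝ f x w := by
  rw [fderiv_const_mul hf]; simp

lemma pd_mul_const {f : E → ℝ} {x : E} (hf : DifferentiableAt ℝ f x) (a : ℝ) (w : E) :
    fderiv ℝ (fun y => f y * a) x w = fderiv ℝ f x w * a := by
  rw [fderiv_mul_const hf]; simp [mul_comm]

lemma clm_pi_apply {n : ℕ} (L : (Fin n → ℝ) →L[ℝ] ℝ) (w : Fin n → ℝ) :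
    L w = ∑ i, w i * L (Pi.single i 1) := by
  have hw : w = ∑ i, w i • (Pi.single i 1 : Fin n → ℝ) := by
    funext k
    simp [Finset.sum_apply, Pi.single_apply]
  conv_lhs => rw [hw]
  rw [map_sum]
  simp [smul_eq_mul]

end AuxLemmas

/-! ### Matrix algebra lemmas -/

lemma wnorm2_eq {d du : ℕ} (R : Matrix (Fin du) (Fin du) ℝ) (hRpd : R.PosDef)
    (A : Matrix (Fin d) (Fin du) ℝ) (u : Fin d → ℝ) :
    wnorm2 R ((R * Aᵀ) *ᵥ u) = u ⬝ᵥ ((A * R * Aᵀ) *ᵥ u) := by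
  have hRinv : R⁻¹ * R = 1 := Matrix.nonsing_inv_mul R (isUnit_iff_ne_zero.mpr hRpd.det_pos.ne')
  unfold wnorm2
  calc ((R * Aᵀ) *ᵥ u) ⬝ᵥ (R⁻¹ *ᵥ ((R * Aᵀ) *ᵥ u))
      = ((R * Aᵀ) *ᵥ u) ⬝ᵥ ((R⁻¹ * (R * Aᵀ)) *ᵥ u) := by rw [Matrix.mulVec_mulVec]
    _ = ((R * Aᵀ) *ᵥ u) ⬝ᵥ (Aᵀ *ᵥ u) := by rw [← Matrix.mul_assoc, hRinv, Matrix.one_mul]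
    _ = (R *ᵥ (Aᵀ *ᵥ u)) ⬝ᵥ (Aᵀ *ᵥ u) := by rw [Matrix.mulVec_mulVec]
    _ = (Aᵀ *ᵥ u) ⬝ᵥ (R *ᵥ (Aᵀ *ᵥ u)) := dotProduct_comm _ _
    _ = u ⬝ᵥ ((A * R * Aᵀ) *ᵥ u) := by
        rw [Matrix.mul_assoc, ← Matrix.mulVec_mulVec, ← Matrix.mulVec_mulVec,
          Matrix.dotProduct_mulVec u A, ← Matrix.vecMul_transpose, Matrix.transpose_transpose]

lemma gram_symm_entry {d du : ℕ} (R : Matrix (Fin du) (Fin du) ℝ) (hRsymm : R.IsSymm)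
    (A : Matrix (Fin d) (Fin du) ℝ) (k l : Fin d) :
    (A * R * Aᵀ) k l = (A * R * Aᵀ) l k := by
  have h : (A * R * Aᵀ)ᵀ = A * R * Aᵀ := by
    rw [Matrix.transpose_mul, Matrix.transpose_mul, Matrix.transpose_transpose, hRsymm.eq,
      ← Matrix.mul_assoc]
  have := congrFun (congrFun h l) k
  simpa [Matrix.transpose_apply] using this

/-! ### Calculus of the joint function -/

/-- The joint function `W(t,x) = v t x`. -/
def Wfun {d : ℕ} (v : ℝ → (Fin d → ℝ) → ℝ) : ℝ × (Fin d → ℝ) → ℝ := fun q => v q.1 q.2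

section W
variable {d : ℕ}

lemma pd_part {φ : ℝ × (Fin d → ℝ) → ℝ} (hφ : Differentiable ℝ φ) (s : ℝ)
    (y w : Fin d → ℝ) :
    fderiv ℝ (fun z => φ (s, z)) y w = fderiv ℝ φ (s, y) (0, w) := by
  have h1 : HasFDerivAt (fun z : Fin d → ℝ => ((s, z) : ℝ × (Fin d → ℝ)))
      ((0 : (Fin d → ℝ) →L[ℝ] ℝ).prod (ContinuousLinearMap.id ℝ (Fin d → ℝ))) y :=
    (hasFDerivAt_const s y).prodMk (hasFDerivAt_id y)
  have h2 : HasFDerivAt (fun z => φ (s, z))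
      ((fderiv ℝ φ (s, y)).comp
        ((0 : (Fin d → ℝ) →L[ℝ] ℝ).prod (ContinuousLinearMap.id ℝ (Fin d → ℝ)))) y :=
    (hφ (s, y)).hasFDerivAt.comp y h1
  rw [h2.fderiv]; rfl

variable (W : ℝ × (Fin d → ℝ) → ℝ) (hW : ContDiff ℝ (⊤:ℕ∞) W)

include hW in
lemma deriv_time (s : ℝ) (y : Fin d → ℝ) :
    deriv (fun r => W (r, y)) s = fderiv ℝ W (s, y) (1, 0) := by
  have h1 : HasDerivAt (fun r : ℝ => ((r, y) : ℝ × (Fin d → ℝ))) ((1:ℝ), (0 : Fin d → ℝ)) s :=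
    (hasDerivAt_id s).prodMk (hasDerivAt_const s y)
  exact (((hW.differentiable my_hone (s, y)).hasFDerivAt).comp_hasDerivAt s h1).deriv

include hW in
lemma flip_fderiv (a : ℝ × (Fin d → ℝ)) (q bv : ℝ × (Fin d → ℝ)) :
    fderiv ℝ (fun q' => fderiv ℝ W q' a) q bv = fderiv ℝ (fderiv ℝ W) q bv a := by
  have h := fderiv_clm_apply (x := q) (c := fderiv ℝ W) (u := fun _ => a)
    ((hW.fderiv_right my_htop).differentiable my_hone q) (differentiableAt_const a)
  rw [h]
  simp

include hW in
lemma sndsymm (q : ℝ × (Fin d → ℝ)) (a bv : ℝ × (Fin d → ℝ)) :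
    fderiv ℝ (fderiv ℝ W) q a bv = fderiv ℝ (fderiv ℝ W) q bv a :=
  second_derivative_symmetric (fun y => (hW.differentiable my_hone y).hasFDerivAt)
    (((hW.fderiv_right my_htop).differentiable my_hone q).hasFDerivAt) a bv

include hW in
lemma part_fderiv (a : ℝ × (Fin d → ℝ)) (s : ℝ) (y w : Fin d → ℝ) :
    fderiv ℝ (fun z => fderiv ℝ W (s, z) a) y w
      = fderiv ℝ (fderiv ℝ W) (s, y) (0, w) a := by
  have h := pd_part (φ := fun q => fderiv ℝ W q a)
    ((contDiff_fderiv_apply hW a).differentiable my_hone) s y w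
  exact h.trans (flip_fderiv W hW a (s, y) (0, w))

end W

section GradHess

variable {d : ℕ} {v : ℝ → (Fin d → ℝ) → ℝ} (hv : ContDiff ℝ (⊤:ℕ∞) (Wfun v))

include hv in
lemma grad_eq (s : ℝ) (y : Fin d → ℝ) (k : Fin d) :
    grad (v s) y k = fderiv ℝ (Wfun v) (s, y) (0, Pi.single k 1) := by
  have h0 : grad (v s) y k = fderiv ℝ (fun z => Wfun v (s, z)) y (Pi.single k 1) := rfl
  rw [h0, pd_part (hv.differentiable my_hone) s y]

include hv in
lemma gradfun_eq (s : ℝ) (k : Fin d) :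
    (fun y => grad (v s) y k) = fun y => fderiv ℝ (Wfun v) (s, y) (0, Pi.single k 1) :=
  funext fun y => grad_eq hv s y k

include hv in
lemma grad_cd (s : ℝ) (k : Fin d) : ContDiff ℝ (⊤:ℕ∞) (fun y => grad (v s) y k) := by
  rw [gradfun_eq hv s k]
  exact (contDiff_fderiv_apply hv _).comp (contDiff_const.prodMk contDiff_id)

include hv in
lemma hess_eq (s : ℝ) (y : Fin d → ℝ) (i k : Fin d) :
    hess (v s) y i k
      = fderiv ℝ (fderiv ℝ (Wfun v)) (s, y) (0, Pi.single i 1) (0, Pi.single k 1) := by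
  have h0 : hess (v s) y i k
      = fderiv ℝ (fun z => grad (v s) z k) y (Pi.single i 1) := rfl
  rw [h0, gradfun_eq hv s k, part_fderiv (Wfun v) hv (0, Pi.single k 1) s y]

include hv in
lemma hess_symm (s : ℝ) (y : Fin d → ℝ) (i k : Fin d) :
    hess (v s) y i k = hess (v s) y k i := by
  rw [hess_eq hv s y i k, hess_eq hv s y k i, sndsymm (Wfun v) hv]

include hv in
lemma hess_cd (s : ℝ) (i k : Fin d) : ContDiff ℝ (⊤:ℕ∞) (fun y => hess (v s) y i k) := by
  have h0 : (fun y => hess (v s) y i k)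
      = fun y => fderiv ℝ (fun z => grad (v s) z k) y (Pi.single i 1) := rfl
  rw [h0, gradfun_eq hv s k]
  exact contDiff_fderiv_apply
    ((contDiff_fderiv_apply hv _).comp (contDiff_const.prodMk contDiff_id)) _

end GradHess

/-- converse direction of Theorem 1.  If `v` solves the HJB equation
and `X` solves the gauged mean-field ODE
`Ẋₜ = b(Xₜ) − β(t,Xₜ) − G(Xₜ)RG(Xₜ)ᵀ∇ₓv(t,Xₜ)`, then `Pₜ := ∇ₓv(t,Xₜ)` satisfies the
momentum equation of the mean-field Pontryagin system with `φₜ = vₜ`, and the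
constraint `∇ₓv(t,Xₜ) = Pₜ` holds for all `t ∈ I`. -/
theorem stmt8 {d du : ℕ}
    (R : Matrix (Fin du) (Fin du) ℝ) (hRsymm : R.IsSymm) (hRpd : R.PosDef)
    (Sig : Matrix (Fin d) (Fin d) ℝ) (hSig : Sig.IsSymm)
    (b : (Fin d → ℝ) → (Fin d → ℝ)) (hb : ContDiff ℝ (⊤ : ℕ∞) b)
    (G : (Fin d → ℝ) → Matrix (Fin d) (Fin du) ℝ)
    (hG : ∀ i j, ContDiff ℝ (⊤ : ℕ∞) fun x => G x i j)
    (c : (Fin d → ℝ) → ℝ) (hc : ContDiff ℝ (⊤ : ℕ∞) c)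
    (I : Set ℝ) (hI : IsOpen I) (hIconn : I.OrdConnected)
    (v : ℝ → (Fin d → ℝ) → ℝ)
    (hv : ContDiff ℝ (⊤ : ℕ∞) fun q : ℝ × (Fin d → ℝ) => v q.1 q.2)
    -- the HJB equation on I × ℝ^d
    (hHJB : ∀ t ∈ I, ∀ x : Fin d → ℝ,
      -deriv (fun s => v s x) t
        = b x ⬝ᵥ grad (v t) x + (1/2) * frob Sig (hess (v t) x) + c x
          - (1/2) * wnorm2 R ((R * (G x)ᵀ) *ᵥ grad (v t) x))
    -- an arbitrary continuous gauge vector field β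
    (β : ℝ → (Fin d → ℝ) → (Fin d → ℝ))
    (hβ : Continuous fun q : ℝ × (Fin d → ℝ) => β q.1 q.2)
    -- X solves the gauged mean-field ODE
    (X : ℝ → (Fin d → ℝ))
    (hX : ∀ t ∈ I, HasDerivAt X
      (b (X t) - β t (X t) - (G (X t) * R * (G (X t))ᵀ) *ᵥ grad (v t) (X t)) t)
    -- P_t := ∇ₓ v(t, X_t)
    (P : ℝ → (Fin d → ℝ)) (hP : ∀ t, P t = grad (v t) (X t)) :
    ∀ t ∈ I,
      HasDerivAt P
        (-((jac b (X t))ᵀ *ᵥ P t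
            - (1/2 : ℝ) • grad (fun x => wnorm2 R ((R * (G x)ᵀ) *ᵥ P t)) (X t)
            + grad c (X t)
            + (hess (v t) (X t)) *ᵥ β t (X t)
            + (1/2 : ℝ) • grad (fun x => frob Sig (hess (v t) x)) (X t))) t
      ∧ grad (v t) (X t) = P t := by
  intro t ht
  have hvW : ContDiff ℝ (⊤:ℕ∞) (Wfun v) := hv
  refine ⟨?_, (hP t).symm⟩
  have hXt := hX t ht
  set XD := b (X t) - β t (X t) - (G (X t) * R * (G (X t))ᵀ) *ᵥ grad (v t) (X t) with hXD
  refine hasDerivAt_pi.mpr fun j => ?_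
  -- differentiability of all the scalar building blocks at X t
  have dp : ∀ k, DifferentiableAt ℝ (fun y => grad (v t) y k) (X t) := fun k =>
    ((grad_cd hvW t k).differentiable my_hone) _
  have db : ∀ k, DifferentiableAt ℝ (fun y => b y k) (X t) := fun k =>
    ((contDiff_pi.mp hb k).differentiable my_hone) _
  have dck : DifferentiableAt ℝ c (X t) := (hc.differentiable my_hone) _
  have hm_cd : ∀ k l, ContDiff ℝ (⊤:ℕ∞) (fun y => (G y * R * (G y)ᵀ) k l) := by
    intro k l
    have h0 : (fun y => (G y * R * (G y)ᵀ) k l)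
        = fun y => ∑ x, (∑ a, G y k a * R a x) * G y l x := by
      funext y
      simp [Matrix.mul_apply, Matrix.transpose_apply]
    rw [h0]
    exact ContDiff.sum fun x _ =>
      (ContDiff.sum fun a _ => (hG k a).mul contDiff_const).mul (hG l x)
  have dm : ∀ k l, DifferentiableAt ℝ (fun y => (G y * R * (G y)ᵀ) k l) (X t) := fun k l =>
    ((hm_cd k l).differentiable my_hone) _
  have dhess : ∀ i k, DifferentiableAt ℝ (fun y => hess (v t) y i k) (X t) := fun i k =>
    ((hess_cd hvW t i k).differentiable my_hone) _
  have dfrob : DifferentiableAt ℝ (fun y => frob Sig (hess (v t) y)) (X t) := by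
    have h0 : (fun y => frob Sig (hess (v t) y))
        = fun y => ∑ i, ∑ k, Sig i k * hess (v t) y i k := rfl
    rw [h0]
    exact DifferentiableAt.fun_sum fun i _ => DifferentiableAt.fun_sum fun k _ =>
      (differentiableAt_const _).mul (dhess i k)
  have dip : ∀ k, DifferentiableAt ℝ
      (fun y => ∑ l, (G y * R * (G y)ᵀ) k l * grad (v t) y l) (X t) := fun k =>
    DifferentiableAt.fun_sum fun l _ => (dm k l).mul (dp l)
  have dt1 : DifferentiableAt ℝ (fun y => ∑ k, b y k * grad (v t) y k) (X t) :=
    DifferentiableAt.fun_sum fun k _ => (db k).mul (dp k)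
  have dt4 : DifferentiableAt ℝ
      (fun y => ∑ k, grad (v t) y k * ∑ l, (G y * R * (G y)ᵀ) k l * grad (v t) y l) (X t) :=
    DifferentiableAt.fun_sum fun k _ => (dp k).mul (dip k)
  have dBf : DifferentiableAt ℝ (fun y => (1/2) * frob Sig (hess (v t) y)) (X t) :=
    (differentiableAt_const _).mul dfrob
  have dDf : DifferentiableAt ℝ
      (fun y => (1/2) * ∑ k, grad (v t) y k * ∑ l, (G y * R * (G y)ᵀ) k l * grad (v t) y l)
      (X t) := (differentiableAt_const _).mul dt4
  -- the function whose derivative we compute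
  have hPfun : (fun s : ℝ => P s j)
      = fun s => fderiv ℝ (Wfun v) (s, X s) (0, Pi.single j 1) :=
    funext fun s => by rw [hP s, grad_eq hvW s (X s) j]
  rw [hPfun]
  have hc' : HasDerivAt (fun s : ℝ => ((s, X s) : ℝ × (Fin d → ℝ))) ((1:ℝ), XD) t :=
    (hasDerivAt_id t).prodMk hXt
  have hchain : HasDerivAt (fun s => fderiv ℝ (Wfun v) (s, X s) (0, Pi.single j 1))
      (fderiv ℝ (fun q => fderiv ℝ (Wfun v) q (0, Pi.single j 1)) (t, X t) ((1:ℝ), XD)) t :=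
    (((contDiff_fderiv_apply hvW (0, Pi.single j 1)).differentiable my_hone
      (t, X t)).hasFDerivAt).comp_hasDerivAt
      (f := fun s : ℝ => ((s, X s) : ℝ × (Fin d → ℝ))) t hc'
  -- the A1 part: HJB differentiated in space
  have hfun : (fun z => fderiv ℝ (Wfun v) (t, z) ((1:ℝ), (0 : Fin d → ℝ)))
      = fun z => -((∑ k, b z k * grad (v t) z k) + (1/2) * frob Sig (hess (v t) z) + c z
          - (1/2) * ∑ k, grad (v t) z k * ∑ l, (G z * R * (G z)ᵀ) k l * grad (v t) z l) := by
    funext y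
    have h1 := hHJB t ht y
    have h2 : deriv (fun s => v s y) t = fderiv ℝ (Wfun v) (t, y) (1, 0) :=
      deriv_time (Wfun v) hvW t y
    rw [h2] at h1
    have h3 : wnorm2 R ((R * (G y)ᵀ) *ᵥ grad (v t) y)
        = ∑ k, grad (v t) y k * ∑ l, (G y * R * (G y)ᵀ) k l * grad (v t) y l := by
      rw [wnorm2_eq R hRpd (G y) (grad (v t) y)]; rfl
    have h4 : b y ⬝ᵥ grad (v t) y = ∑ k, b y k * grad (v t) y k := rfl
    rw [h3, h4] at h1
    linarith [h1]
  -- value of the pd of the inner sum in the quadratic term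
  have e4inner : ∀ k, fderiv ℝ (fun y => ∑ l, (G y * R * (G y)ᵀ) k l * grad (v t) y l)
      (X t) (Pi.single j 1)
      = ∑ l, ((G (X t) * R * (G (X t))ᵀ) k l * hess (v t) (X t) j l
          + grad (v t) (X t) l
            * fderiv ℝ (fun y => (G y * R * (G y)ᵀ) k l) (X t) (Pi.single j 1)) := fun k =>
    (pd_sum (fun l _ => (dm k l).mul (dp l)) _).trans
      (Finset.sum_congr rfl fun l _ => pd_mul (dm k l) (dp l) _)
  have e4 : fderiv ℝ
      (fun y => ∑ k, grad (v t) y k * ∑ l, (G y * R * (G y)ᵀ) k l * grad (v t) y l)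
      (X t) (Pi.single j 1)
      = ∑ k, (grad (v t) (X t) k
            * (∑ l, ((G (X t) * R * (G (X t))ᵀ) k l * hess (v t) (X t) j l
                + grad (v t) (X t) l
                  * fderiv ℝ (fun y => (G y * R * (G y)ᵀ) k l) (X t) (Pi.single j 1)))
          + (∑ l, (G (X t) * R * (G (X t))ᵀ) k l * grad (v t) (X t) l)
            * hess (v t) (X t) j k) :=
    (pd_sum (fun k _ => (dp k).mul (dip k)) _).trans
      (Finset.sum_congr rfl fun k _ => (pd_mul (dp k) (dip k) _).trans (by rw [e4inner k]; rfl))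
  have e1 : fderiv ℝ (fun y => ∑ k, b y k * grad (v t) y k) (X t) (Pi.single j 1)
      = ∑ k, (b (X t) k * hess (v t) (X t) j k + grad (v t) (X t) k * jac b (X t) k j) :=
    (pd_sum (fun k _ => (db k).mul (dp k)) _).trans
      (Finset.sum_congr rfl fun k _ => pd_mul (db k) (dp k) _)
  -- total spatial derivative of the HJB right-hand side
  have r0 : fderiv ℝ (fun y => (∑ k, b y k * grad (v t) y k)
        + (1/2) * frob Sig (hess (v t) y) + c y
        - (1/2) * ∑ k, grad (v t) y k * ∑ l, (G y * R * (G y)ᵀ) k l * grad (v t) y l)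
      (X t) (Pi.single j 1)
      = fderiv ℝ (fun y => (∑ k, b y k * grad (v t) y k)
          + (1/2) * frob Sig (hess (v t) y) + c y) (X t) (Pi.single j 1)
        - fderiv ℝ (fun y =>
            (1/2) * ∑ k, grad (v t) y k * ∑ l, (G y * R * (G y)ᵀ) k l * grad (v t) y l)
          (X t) (Pi.single j 1) :=
    pd_sub ((dt1.add dBf).add dck) dDf _
  have r1 : fderiv ℝ (fun y => (∑ k, b y k * grad (v t) y k)
        + (1/2) * frob Sig (hess (v t) y) + c y) (X t) (Pi.single j 1)
      = fderiv ℝ (fun y => (∑ k, b y k * grad (v t) y k)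
          + (1/2) * frob Sig (hess (v t) y)) (X t) (Pi.single j 1)
        + fderiv ℝ c (X t) (Pi.single j 1) :=
    pd_add (dt1.add dBf) dck _
  have r2 : fderiv ℝ (fun y => (∑ k, b y k * grad (v t) y k)
        + (1/2) * frob Sig (hess (v t) y)) (X t) (Pi.single j 1)
      = fderiv ℝ (fun y => ∑ k, b y k * grad (v t) y k) (X t) (Pi.single j 1)
        + fderiv ℝ (fun y => (1/2) * frob Sig (hess (v t) y)) (X t) (Pi.single j 1) :=
    pd_add dt1 dBf _
  have r3 : fderiv ℝ (fun y => (1/2) * frob Sig (hess (v t) y)) (X t) (Pi.single j 1)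
      = (1/2) * grad (fun x => frob Sig (hess (v t) x)) (X t) j :=
    pd_const_mul dfrob (1/2) _
  have r4 : fderiv ℝ (fun y =>
        (1/2) * ∑ k, grad (v t) y k * ∑ l, (G y * R * (G y)ᵀ) k l * grad (v t) y l)
      (X t) (Pi.single j 1)
      = (1/2) * ∑ k, (grad (v t) (X t) k
            * (∑ l, ((G (X t) * R * (G (X t))ᵀ) k l * hess (v t) (X t) j l
                + grad (v t) (X t) l
                  * fderiv ℝ (fun y => (G y * R * (G y)ᵀ) k l) (X t) (Pi.single j 1)))
          + (∑ l, (G (X t) * R * (G (X t))ᵀ) k l * grad (v t) (X t) l)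
            * hess (v t) (X t) j k) :=
    (pd_const_mul dt4 (1/2) _).trans (by rw [e4])
  -- A1
  have hA1 : fderiv ℝ (fderiv ℝ (Wfun v)) (t, X t) ((1:ℝ), (0 : Fin d → ℝ))
        (0, Pi.single j 1)
      = -((∑ k, (b (X t) k * hess (v t) (X t) j k + grad (v t) (X t) k * jac b (X t) k j))
          + (1/2) * grad (fun x => frob Sig (hess (v t) x)) (X t) j
          + grad c (X t) j
          - (1/2) * ∑ k, (grad (v t) (X t) k
              * (∑ l, ((G (X t) * R * (G (X t))ᵀ) k l * hess (v t) (X t) j l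
                  + grad (v t) (X t) l
                    * fderiv ℝ (fun y => (G y * R * (G y)ᵀ) k l) (X t) (Pi.single j 1)))
            + (∑ l, (G (X t) * R * (G (X t))ᵀ) k l * grad (v t) (X t) l)
              * hess (v t) (X t) j k)) := by
    rw [sndsymm (Wfun v) hvW (t, X t) ((1:ℝ), (0 : Fin d → ℝ)) (0, Pi.single j 1),
      ← part_fderiv (Wfun v) hvW ((1:ℝ), (0 : Fin d → ℝ)) t (X t) (Pi.single j 1),
      hfun, fderiv_fun_neg]
    rw [ContinuousLinearMap.neg_apply]
    rw [r0, r1, r2, r3, r4, e1]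
    rfl
  -- A2
  have hA2 : fderiv ℝ (fderiv ℝ (Wfun v)) (t, X t) ((0:ℝ), XD) (0, Pi.single j 1)
      = ∑ i, XD i * hess (v t) (X t) i j := by
    have h1 := part_fderiv (Wfun v) hvW (0, Pi.single j 1) t (X t) XD
    rw [← h1]
    have h2 : (fun z => fderiv ℝ (Wfun v) (t, z) ((0:ℝ), Pi.single j 1))
        = fun z => grad (v t) z j := (gradfun_eq hvW t j).symm
    rw [h2]
    exact clm_pi_apply (fderiv ℝ (fun z => grad (v t) z j) (X t)) XD
  -- split the direction
  have hsplit : fderiv ℝ (fun q => fderiv ℝ (Wfun v) q (0, Pi.single j 1)) (t, X t)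
        ((1:ℝ), XD)
      = fderiv ℝ (fderiv ℝ (Wfun v)) (t, X t) ((1:ℝ), (0 : Fin d → ℝ)) (0, Pi.single j 1)
        + fderiv ℝ (fderiv ℝ (Wfun v)) (t, X t) ((0:ℝ), XD) (0, Pi.single j 1) := by
    rw [flip_fderiv (Wfun v) hvW (0, Pi.single j 1) (t, X t) ((1:ℝ), XD)]
    have hadd : ((1:ℝ), XD) = ((1:ℝ), (0 : Fin d → ℝ)) + ((0:ℝ), XD) := by
      simp
    rw [hadd, map_add]
    simp
  -- now prove the value identity
  have hXDi : ∀ i, XD i = b (X t) i - β t (X t) i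
      - ∑ l, (G (X t) * R * (G (X t))ᵀ) i l * grad (v t) (X t) l := fun i => by
    rw [hXD]; rfl
  -- frozen gradient of the weighted norm
  have hWF : grad (fun x => wnorm2 R ((R * (G x)ᵀ) *ᵥ grad (v t) (X t))) (X t) j
      = ∑ k, grad (v t) (X t) k
          * ∑ l, fderiv ℝ (fun y => (G y * R * (G y)ᵀ) k l) (X t) (Pi.single j 1)
              * grad (v t) (X t) l := by
    have h0 : (fun x => wnorm2 R ((R * (G x)ᵀ) *ᵥ grad (v t) (X t)))
        = fun x => ∑ k, grad (v t) (X t) k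
            * ∑ l, (G x * R * (G x)ᵀ) k l * grad (v t) (X t) l := by
      funext x
      rw [wnorm2_eq R hRpd (G x) (grad (v t) (X t))]; rfl
    have h1 : grad (fun x => wnorm2 R ((R * (G x)ᵀ) *ᵥ grad (v t) (X t))) (X t) j
        = fderiv ℝ (fun x => ∑ k, grad (v t) (X t) k
            * ∑ l, (G x * R * (G x)ᵀ) k l * grad (v t) (X t) l) (X t) (Pi.single j 1) := by
      show fderiv ℝ _ (X t) (Pi.single j 1) = _
      rw [h0]
    rw [h1]
    have hd : ∀ k, DifferentiableAt ℝ
        (fun x => ∑ l, (G x * R * (G x)ᵀ) k l * grad (v t) (X t) l) (X t) := fun k =>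
      DifferentiableAt.fun_sum fun l _ => (dm k l).mul (differentiableAt_const _)
    refine (pd_sum (fun k _ => (differentiableAt_const _).fun_mul (hd k)) _).trans
      (Finset.sum_congr rfl fun k _ => ?_)
    rw [pd_const_mul (hd k) _ _]
    congr 1
    refine (pd_sum (fun l _ => (dm k l).fun_mul (differentiableAt_const _)) _).trans
      (Finset.sum_congr rfl fun l _ => ?_)
    exact pd_mul_const (dm k l) _ _
  -- symmetry facts
  have hHs : ∀ i k, hess (v t) (X t) i k = hess (v t) (X t) k i := fun i k =>
    hess_symm hvW t (X t) i k
  have hms : ∀ k l, (G (X t) * R * (G (X t))ᵀ) k l = (G (X t) * R * (G (X t))ᵀ) l k :=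
    fun k l => gram_symm_entry R hRsymm (G (X t)) k l
  -- sum identities
  have key1 : (∑ k, grad (v t) (X t) k
        * ∑ l, (G (X t) * R * (G (X t))ᵀ) k l * hess (v t) (X t) j l)
      = ∑ i, (∑ l, (G (X t) * R * (G (X t))ᵀ) i l * grad (v t) (X t) l)
          * hess (v t) (X t) i j := by
    calc ∑ k, grad (v t) (X t) k
          * ∑ l, (G (X t) * R * (G (X t))ᵀ) k l * hess (v t) (X t) j l
        = ∑ k, ∑ l, ((G (X t) * R * (G (X t))ᵀ) l k * grad (v t) (X t) k)
            * hess (v t) (X t) l j := Finset.sum_congr rfl fun k _ => by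
          rw [Finset.mul_sum]
          exact Finset.sum_congr rfl fun l _ => by
            rw [hms k l, hHs j l]; ring
      _ = ∑ l, ∑ k, ((G (X t) * R * (G (X t))ᵀ) l k * grad (v t) (X t) k)
            * hess (v t) (X t) l j := Finset.sum_comm
      _ = ∑ l, (∑ k, (G (X t) * R * (G (X t))ᵀ) l k * grad (v t) (X t) k)
            * hess (v t) (X t) l j :=
          Finset.sum_congr rfl fun l _ => (Finset.sum_mul _ _ _).symm
  have key2 : (∑ k, (∑ l, (G (X t) * R * (G (X t))ᵀ) k l * grad (v t) (X t) l)
        * hess (v t) (X t) j k)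
      = ∑ i, (∑ l, (G (X t) * R * (G (X t))ᵀ) i l * grad (v t) (X t) l)
          * hess (v t) (X t) i j :=
    Finset.sum_congr rfl fun k _ => by rw [hHs j k]
  -- final value identity
  have hval : fderiv ℝ (fun q => fderiv ℝ (Wfun v) q (0, Pi.single j 1)) (t, X t)
        ((1:ℝ), XD)
      = (-((jac b (X t))ᵀ *ᵥ P t
          - (1/2 : ℝ) • grad (fun x => wnorm2 R ((R * (G x)ᵀ) *ᵥ P t)) (X t)
          + grad c (X t)
          + (hess (v t) (X t)) *ᵥ β t (X t)
          + (1/2 : ℝ) • grad (fun x => frob Sig (hess (v t) x)) (X t))) j := by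
    rw [hsplit, hA1, hA2]
    simp only [hP, Pi.neg_apply, Pi.add_apply, Pi.sub_apply, Pi.smul_apply, smul_eq_mul,
      Matrix.mulVec, dotProduct, Matrix.transpose_apply]
    rw [hWF]
    have s2 : (∑ k, (grad (v t) (X t) k
          * (∑ l, ((G (X t) * R * (G (X t))ᵀ) k l * hess (v t) (X t) j l
              + grad (v t) (X t) l
                * fderiv ℝ (fun y => (G y * R * (G y)ᵀ) k l) (X t) (Pi.single j 1)))
        + (∑ l, (G (X t) * R * (G (X t))ᵀ) k l * grad (v t) (X t) l)
          * hess (v t) (X t) j k))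
        = ((∑ k, grad (v t) (X t) k
            * ∑ l, (G (X t) * R * (G (X t))ᵀ) k l * hess (v t) (X t) j l)
          + (∑ k, grad (v t) (X t) k
              * ∑ l, grad (v t) (X t) l
                * fderiv ℝ (fun y => (G y * R * (G y)ᵀ) k l) (X t) (Pi.single j 1)))
          + (∑ k, (∑ l, (G (X t) * R * (G (X t))ᵀ) k l * grad (v t) (X t) l)
              * hess (v t) (X t) j k) := by
      rw [← Finset.sum_add_distrib, ← Finset.sum_add_distrib]
      exact Finset.sum_congr rfl fun k _ => by
        rw [Finset.sum_add_distrib, mul_add]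
    have s5 : (∑ k, grad (v t) (X t) k
          * ∑ l, grad (v t) (X t) l
            * fderiv ℝ (fun y => (G y * R * (G y)ᵀ) k l) (X t) (Pi.single j 1))
        = ∑ k, grad (v t) (X t) k
            * ∑ l, fderiv ℝ (fun y => (G y * R * (G y)ᵀ) k l) (X t) (Pi.single j 1)
                * grad (v t) (X t) l :=
      Finset.sum_congr rfl fun k _ => congrArg (fun z => grad (v t) (X t) k * z)
        (Finset.sum_congr rfl fun l _ => mul_comm _ _)
    have s6 : (∑ i, XD i * hess (v t) (X t) i j)
        = ((∑ i, b (X t) i * hess (v t) (X t) i j)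
            - ∑ i, β t (X t) i * hess (v t) (X t) i j)
          - ∑ i, (∑ l, (G (X t) * R * (G (X t))ᵀ) i l * grad (v t) (X t) l)
              * hess (v t) (X t) i j := by
      rw [← Finset.sum_sub_distrib, ← Finset.sum_sub_distrib]
      exact Finset.sum_congr rfl fun i _ => by rw [hXDi i]; ring
    have s7 : (∑ i, b (X t) i * hess (v t) (X t) i j)
        = ∑ k, b (X t) k * hess (v t) (X t) j k :=
      Finset.sum_congr rfl fun k _ => by rw [hHs k j]
    have s8 : (∑ i, β t (X t) i * hess (v t) (X t) i j)
        = ∑ k, hess (v t) (X t) j k * β t (X t) k :=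
      Finset.sum_congr rfl fun k _ => by rw [hHs k j, mul_comm]
    have s9 : (∑ k, (b (X t) k * hess (v t) (X t) j k
          + grad (v t) (X t) k * jac b (X t) k j))
        = (∑ k, b (X t) k * hess (v t) (X t) j k)
          + ∑ k, grad (v t) (X t) k * jac b (X t) k j := Finset.sum_add_distrib
    have s10 : (∑ k, jac b (X t) k j * grad (v t) (X t) k)
        = ∑ k, grad (v t) (X t) k * jac b (X t) k j :=
      Finset.sum_congr rfl fun k _ => mul_comm _ _
    rw [s2, s5, key1, key2, s6, s7, s8, s9, s10]
    ring
  exact hval ▸ hchain
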